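/- arXiv:1711.01150 — 3 statements merged into one kernel-verified Lean document; each statement's English description precedes it below -/
import Mathlib

section
/- Let r ≥ 2 and n ≥ 1 be integers, set m = (r-1)n - 1, and let w = e^{2πi/r}. Suppose x_1, ..., x_m are complex numbers such that R_{rn}(X) = X · ∏_{k=1}^{m} ∏_{l=0}^{r-1} (X - x_k w^l). Then ∑_{k=1}^{m} x_k^r = -C_r(rn - 2, 1). -/
noncomputable def RBon (r : ℕ) : ℕ → Polynomial ℂ
  | 0 => 0
  | 1 => 1
  | n + 2 => ∑ i ∈ (Finset.range r).attach,
      Polynomial.X ^ (i : ℕ) * RBon r (n + 2 - (r - (i : ℕ)))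
  decreasing_by
    have h := i.2
    rw [Finset.mem_range] at h
    omega

noncomputable def rnomial (r n j : ℕ) : ℕ :=
  ((∑ i ∈ Finset.range r, (Polynomial.X : Polynomial ℕ) ^ i) ^ n).coeff j

/-! The top of `R_s` is governed by the last two terms of the recursion: `R_s` is monic of degree
`(r - 1) * (s - 1)`, and its coefficient `r` degrees below the top is `s - 2`, since each step of
the recursion adds the leading coefficient `1` of `R_(s-2)`. On the other side, the factors
belonging to one `x_k` multiply to `X ^ r - x_k ^ r`, so the right-hand side is `X` times a
polynomial in `X ^ r`, whose coefficient `r` degrees below the top is `-∑ x_k ^ r` by Vieta. -/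

open Polynomial

theorem RBon_add_two (r n : ℕ) :
    RBon r (n + 2) = ∑ i ∈ Finset.range r, X ^ i * RBon r (n + 2 - (r - i)) := by
  rw [RBon]
  exact Finset.sum_attach (Finset.range r) fun i => X ^ i * RBon r (n + 2 - (r - i))

theorem natDegree_RBon_le (r s : ℕ) : (RBon r s).natDegree ≤ (r - 1) * (s - 1) := by
  induction s using Nat.strong_induction_on with
  | _ s ih =>
    match s with
    | 0 => simp [RBon]
    | 1 => simp [RBon]
    | s + 2 =>
      rw [RBon_add_two]
      refine natDegree_sum_le_of_forall_le _ _ fun i hi => ?_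
      have hi := Finset.mem_range.1 hi
      have hsub : (r - 1) * (s + 2 - (r - i) - 1) ≤ (r - 1) * s :=
        Nat.mul_le_mul_left _ (by omega)
      have : (r - 1) * (s + 2 - 1) = (r - 1) * s + (r - 1) := by
        rw [show s + 2 - 1 = s + 1 by omega, mul_add_one]
      calc (X ^ i * RBon r (s + 2 - (r - i))).natDegree
          ≤ i + (r - 1) * (s + 2 - (r - i) - 1) :=
            natDegree_mul_le_of_le (natDegree_X_pow_le _) (ih _ (by omega))
        _ ≤ (r - 1) * (s + 2 - 1) := by omega

theorem coeff_X_pow_mul_RBon_of_lt {r t i j : ℕ} (h : i + (r - 1) * (t - 1) < j) :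
    (X ^ i * RBon r t).coeff j = 0 :=
  coeff_eq_zero_of_natDegree_lt <|
    (natDegree_mul_le_of_le (natDegree_X_pow_le _) (natDegree_RBon_le r t)).trans_lt h

theorem coeff_RBon_succ_top {r : ℕ} (hr : 0 < r) (s : ℕ) :
    (RBon r (s + 1)).coeff ((r - 1) * s) = 1 := by
  obtain ⟨k, rfl⟩ : ∃ k, r = k + 1 := ⟨r - 1, by omega⟩
  rw [Nat.add_sub_cancel]
  induction s with
  | zero => simp [RBon]
  | succ s ih =>
    rw [RBon_add_two, finsetSum_coeff, Finset.sum_range_succ, Nat.add_sub_cancel_left,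
      show s + 2 - 1 = s + 1 from rfl, X_pow_mul, mul_add_one, coeff_mul_X_pow, ih, add_eq_right]
    refine Finset.sum_eq_zero fun i hi => coeff_X_pow_mul_RBon_of_lt ?_
    have hi := Finset.mem_range.1 hi
    have : k * (s + 2 - (k + 1 - i) - 1) ≤ k * s := Nat.mul_le_mul_left _ (by omega)
    rw [Nat.add_sub_cancel]
    omega

theorem coeff_RBon_add_three_eq {r : ℕ} (hr : 2 ≤ r) (s : ℕ) :
    (RBon r (s + 3)).coeff ((r - 1) * s + (r - 2)) =
      1 + (X ^ (r - 1) * RBon r (s + 2)).coeff ((r - 1) * s + (r - 2)) := by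
  obtain ⟨k, rfl⟩ : ∃ k, r = k + 2 := ⟨r - 2, by omega⟩
  simp only [Nat.add_sub_cancel, show k + 2 - 1 = k + 1 from rfl]
  rw [RBon_add_two, finsetSum_coeff, Finset.sum_range_succ, Finset.sum_range_succ,
    show k + 2 - k = 2 by omega, show k + 2 - (k + 1) = 1 by omega,
    show s + 1 + 2 - 2 = s + 1 from rfl, show s + 1 + 2 - 1 = s + 2 from rfl,
    X_pow_mul (n := k), coeff_mul_X_pow]
  have htop : (RBon (k + 2) (s + 1)).coeff ((k + 1) * s) = 1 := coeff_RBon_succ_top (by omega) s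
  rw [htop]
  simp only [add_left_inj, add_eq_right]
  refine Finset.sum_eq_zero fun i hi => coeff_X_pow_mul_RBon_of_lt ?_
  have hi := Finset.mem_range.1 hi
  have : (k + 2 - 1) * (s + 1 + 2 - (k + 2 - i) - 1) ≤ (k + 1) * s :=
    Nat.mul_le_mul_left _ (by omega)
  omega

theorem coeff_RBon_add_three {r : ℕ} (hr : 2 ≤ r) (s : ℕ) :
    (RBon r (s + 3)).coeff ((r - 1) * s + (r - 2)) = s + 1 := by
  induction s with
  | zero => rw [coeff_RBon_add_three_eq hr, X_pow_mul, coeff_mul_X_pow', if_neg (by omega)]; simp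
  | succ s ih =>
    rw [coeff_RBon_add_three_eq hr, X_pow_mul,
      show (r - 1) * (s + 1) + (r - 2) = (r - 1) * s + (r - 2) + (r - 1) by ring,
      coeff_mul_X_pow, ih]
    push_cast
    ring

theorem rnomial_one_right {r : ℕ} (hr : 2 ≤ r) (N : ℕ) : rnomial r N 1 = N := by
  have hcoeff : ∀ j < r, (∑ i ∈ Finset.range r, (X : ℕ[X]) ^ i).coeff j = 1 := fun j hj => by
    simp [coeff_X_pow, hj]
  rw [rnomial, ← coeff_coe, coe_pow, PowerSeries.coeff_one_pow,
    ← PowerSeries.coeff_zero_eq_constantCoeff, coeff_coe, coeff_coe,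
    hcoeff 0 (by omega), hcoeff 1 (by omega)]
  simp

theorem coeff_prod_X_pow_sub_C {R : Type*} [CommRing R] {r : ℕ} (hr : 0 < r) {m : ℕ}
    (a : Fin (m + 1) → R) : (∏ k, (X ^ r - C (a k))).coeff (r * m) = -∑ k, a k := by
  have hexpand : ∏ k, (X ^ r - C (a k)) = expand R r (∏ k, (X - C (a k))) := by
    simp [map_prod]
  rw [hexpand, coeff_expand_mul' hr]
  simpa using prod_X_sub_C_coeff_card_pred Finset.univ a (by simp)

theorem stmt_1_general (r n : ℕ) (hr : 2 ≤ r)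
    (m : ℕ) (hm : m = (r - 1) * n - 1)
    (w : ℂ) (hw : w = Complex.exp (2 * Real.pi * Complex.I / r))
    (x : Fin m → ℂ)
    (hfac : RBon r (r * n) =
      Polynomial.X * ∏ k : Fin m, ∏ l ∈ Finset.range r,
        (Polynomial.X - Polynomial.C (x k * w ^ l))) :
    ∑ k : Fin m, x k ^ r = -(rnomial r (r * n - 2) 1 : ℂ) := by
  have hζ : IsPrimitiveRoot w r := hw ▸ Complex.isPrimitiveRoot_exp r (by omega)
  replace hfac : RBon r (r * n) = X * ∏ k, (X ^ r - C (x k ^ r)) := by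
    simp_rw [hfac, X_pow_sub_C_eq_prod hζ (by omega) rfl, mul_comm]
  have hrn : r * n = (r - 1) * n + n := by
    nth_rw 1 [← Nat.sub_add_cancel (by omega : 1 ≤ r)]
    ring
  have hn : n ≤ (r - 1) * n := Nat.le_mul_of_pos_left n (by omega)
  rw [rnomial_one_right hr]
  rcases m with _ | m
  · -- `(r - 1) * n ≤ 1` forces `r * n ≤ 2`, so both sides vanish
    simp [show r * n - 2 = 0 by omega]
  · have hm' : m + 2 = (r - 1) * n := by omega
    have hn0 : 0 < n := Nat.pos_of_ne_zero (by rintro rfl; simp at hm')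
    obtain ⟨s, hs⟩ : ∃ s, r * n = s + 3 := ⟨r * n - 3, by omega⟩
    have hidx : (r - 1) * s + (r - 2) = r * m + 1 := by
      zify [hr, (by omega : 1 ≤ r)] at hs hm' ⊢
      linear_combination (1 - (r : ℤ)) * hs - r * hm'
    have hcoeff := congrArg (coeff · (r * m + 1)) hfac
    rw [coeff_X_mul, coeff_prod_X_pow_sub_C (by omega : 0 < r), ← hidx, hs,
      coeff_RBon_add_three hr] at hcoeff
    rw [hs, show s + 3 - 2 = s + 1 by omega]
    push_cast
    linear_combination hcoeff

theorem stmt_1 (r n : ℕ) (hr : 2 ≤ r) (hn : 1 ≤ n)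
    (m : ℕ) (hm : m = (r - 1) * n - 1)
    (w : ℂ) (hw : w = Complex.exp (2 * Real.pi * Complex.I / r))
    (x : Fin m → ℂ)
    (hfac : RBon r (r * n) =
      Polynomial.X * ∏ k : Fin m, ∏ l ∈ Finset.range r,
        (Polynomial.X - Polynomial.C (x k * w ^ l))) :
    ∑ k : Fin m, x k ^ r = -(rnomial r (r * n - 2) 1 : ℂ) :=
  stmt_1_general r n hr m hm w hw x hfac
end

section
/- Let r ≥ 2 and n ≥ 1 be integers, set m = (r-1)n, and let w = e^{2πi/r}. Suppose x_1, ..., x_m are complex numbers such that the R-Bonacci polynomial factors as R_{rn+1}(X) = ∏_{k=1}^{m} ∏_{l=0}^{r-1} (X - x_k w^l). Then for every j with 0 ≤ j ≤ m, the j-th elementary symmetric polynomial of the r-th powers of the x_k satisfies σ_j(x_1^r, ..., x_m^r) = (-1)^j · C_r(rn - j, j). -/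
open Polynomial Finset in
lemma rnomial_zero_left (r j : ℕ) : rnomial r 0 j = if j = 0 then 1 else 0 := by
  simp [rnomial, Polynomial.coeff_one]

open Polynomial Finset in
lemma rnomial_zero_right (r n : ℕ) (hr : 1 ≤ r) : rnomial r n 0 = 1 := by
  unfold rnomial
  rw [Polynomial.coeff_zero_eq_eval_zero, Polynomial.eval_pow, Polynomial.eval_finset_sum]
  simp only [Polynomial.eval_pow, Polynomial.eval_X, zero_pow_eq,
    Finset.sum_ite_eq' (Finset.range r) 0]
  simp [Nat.pos_of_ne_zero, hr, Finset.mem_range]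
  omega

open Polynomial Finset in
lemma coeff_geom (r a : ℕ) :
    (∑ i ∈ Finset.range r, (Polynomial.X : Polynomial ℕ) ^ i).coeff a
    = if a < r then 1 else 0 := by
  rw [Polynomial.finset_sum_coeff]
  simp only [Polynomial.coeff_X_pow]
  rw [Finset.sum_ite_eq (Finset.range r) a (fun _ => 1)]
  simp [Finset.mem_range]

open Polynomial Finset in
lemma rnomial_succ (r n j : ℕ) :
    rnomial r (n+1) j = ∑ i ∈ Finset.range (min (j+1) r), rnomial r n (j - i) := by
  unfold rnomial
  rw [pow_succ, mul_comm, Polynomial.coeff_mul,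
    Finset.Nat.sum_antidiagonal_eq_sum_range_succ_mk]
  simp only [coeff_geom]
  rw [← Finset.sum_filter_add_sum_filter_not (Finset.range (j+1)) (· < r)]
  have h1 : Finset.filter (· < r) (Finset.range (j+1)) = Finset.range (min (j+1) r) := by
    ext a; simp only [Finset.mem_filter, Finset.mem_range, Finset.mem_range]
    omega
  have h2 : ∑ a ∈ Finset.filter (fun a => ¬ a < r) (Finset.range (j+1)),
      (if a < r then 1 else 0) *
        ((∑ i ∈ Finset.range r, (Polynomial.X : Polynomial ℕ) ^ i) ^ n).coeff (j - a) = 0 := by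
    apply Finset.sum_eq_zero; intro a ha
    simp only [Finset.mem_filter] at ha
    simp [ha.2]
  rw [h2, add_zero, h1]
  apply Finset.sum_congr rfl
  intro a ha
  simp only [Finset.mem_range, lt_min_iff] at ha
  simp [ha.2]

open Polynomial Finset in
lemma rnomial_eq_zero (r n j : ℕ) (h : (r-1)*n < j) : rnomial r n j = 0 := by
  unfold rnomial
  apply Polynomial.coeff_eq_zero_of_natDegree_lt
  calc ((∑ i ∈ Finset.range r, (Polynomial.X : Polynomial ℕ) ^ i) ^ n).natDegree
      ≤ n * (∑ i ∈ Finset.range r, (Polynomial.X : Polynomial ℕ) ^ i).natDegree :=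
        Polynomial.natDegree_pow_le
    _ ≤ n * (r-1) := by
        apply Nat.mul_le_mul_left
        apply Polynomial.natDegree_sum_le_of_forall_le
        intro i hi
        simp only [Polynomial.natDegree_X_pow]
        exact Nat.le_sub_one_of_lt (Finset.mem_range.mp hi)
    _ = (r-1) * n := Nat.mul_comm _ _
    _ < j := h

noncomputable def Fpoly (r N : ℕ) : Polynomial ℂ :=
  ∑ j ∈ Finset.range (N+1),
    Polynomial.C ((rnomial r (N - j) j : ℕ) : ℂ) * Polynomial.X ^ ((r-1)*N - r*j)

lemma exp_arith (r N j i' : ℕ) (hr : 2 ≤ r) (hjN : j < N) (hij : i' ≤ j) (hir : i' < r)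
    (hb : j - i' ≤ (r-1)*(N-1-j)) :
    (r-1)*N - r*j = (r-1-i') + ((r-1)*(N-(i'+1)) - r*(j-i')) := by
  obtain ⟨s, rfl⟩ : ∃ s, r = s + 2 := ⟨r - 2, by omega⟩
  obtain ⟨b, rfl⟩ : ∃ b, j = b + i' := ⟨j - i', by omega⟩
  obtain ⟨a, rfl⟩ : ∃ a, N = a + (b + i') + 1 := ⟨N - 1 - (b + i'), by omega⟩
  have hb' : b ≤ (s+1)*a := by
    have h1 : (b + i') - i' = b := by omega
    have h2 : (a + (b + i') + 1) - 1 - (b + i') = a := by omega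
    rw [h1, h2] at hb
    simpa using hb
  have hi : i' ≤ s + 1 := by omega
  rw [show (a + (b + i') + 1) - (i' + 1) = a + b by omega,
      show (b + i') - i' = b by omega,
      show s + 2 - 1 - i' = s + 1 - i' by omega,
      show s + 2 - 1 = s + 1 by omega]
  have E1 : (s+1)*(a + (b + i') + 1) = (s+1)*a + (s+1)*b + (s+1)*i' + (s+1) := by ring
  have E2 : (s+2)*(b + i') = ((s+1)*b + b) + ((s+1)*i' + i') := by ring
  have E3 : (s+1)*(a+b) = (s+1)*a + (s+1)*b := by ring
  have E4 : (s+2)*b = (s+1)*b + b := by ring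
  rw [E1, E2, E3, E4]
  generalize (s+1)*a = A at hb' ⊢
  generalize (s+1)*b = B
  generalize (s+1)*i' = Ci
  omega

open Polynomial Finset in
lemma Frec (r N : ℕ) (hr : 2 ≤ r) (hN : 1 ≤ N) :
    Fpoly r N = ∑ i ∈ Finset.range r,
      Polynomial.X ^ i * (if r - i ≤ N then Fpoly r (N - (r - i)) else 0) := by
  have hRHS : ∀ i ∈ Finset.range r,
      Polynomial.X ^ i * (if r - i ≤ N then Fpoly r (N - (r - i)) else 0)
      = ∑ j' ∈ Finset.range (N + 1 - (r - i)),
          Polynomial.C ((rnomial r (N - (r-i) - j') j' : ℕ) : ℂ)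
            * Polynomial.X ^ (i + ((r-1)*(N - (r-i)) - r*j')) := by
    intro i hi
    rw [Finset.mem_range] at hi
    by_cases h : r - i ≤ N
    · rw [if_pos h]
      rw [show N + 1 - (r - i) = (N - (r - i)) + 1 by omega, Fpoly, Finset.mul_sum]
      apply Finset.sum_congr rfl
      intro j' _
      rw [pow_add]
      ring
    · rw [if_neg h, show N + 1 - (r - i) = 0 by omega]
      simp
  rw [Finset.sum_congr rfl hRHS, Finset.sum_sigma']
  have hlast : ((rnomial r (N - N) N : ℕ) : ℂ) = 0 := by
    rw [Nat.sub_self, rnomial_zero_left]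
    simp only [Nat.cast_ite, Nat.cast_one, Nat.cast_zero, ite_eq_right_iff]
    intro h; omega
  rw [Fpoly, Finset.sum_range_succ, hlast]
  simp only [map_zero, zero_mul, add_zero]
  have hterm : ∀ j ∈ Finset.range N,
      Polynomial.C ((rnomial r (N - j) j : ℕ) : ℂ) * Polynomial.X ^ ((r-1)*N - r*j)
      = ∑ i' ∈ Finset.range (min (j+1) r),
          Polynomial.C ((rnomial r (N-1-j) (j - i') : ℕ) : ℂ)
            * Polynomial.X ^ ((r-1)*N - r*j) := by
    intro j hj
    rw [Finset.mem_range] at hj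
    rw [show N - j = (N - 1 - j) + 1 by omega, rnomial_succ, Nat.cast_sum, map_sum,
      Finset.sum_mul]
  rw [Finset.sum_congr rfl hterm, Finset.sum_sigma']
  apply Finset.sum_nbij' (i := fun p => (⟨r-1-p.2, p.1-p.2⟩ : (_ : ℕ) × ℕ))
    (j := fun q => (⟨q.2 + (r-1-q.1), r-1-q.1⟩ : (_ : ℕ) × ℕ))
  · rintro ⟨j, i'⟩ hp
    simp only [Finset.mem_sigma, Finset.mem_range, lt_min_iff] at hp
    dsimp only
    simp only [Finset.mem_sigma, Finset.mem_range, lt_min_iff]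
    omega
  · rintro ⟨i, j'⟩ hq
    simp only [Finset.mem_sigma, Finset.mem_range, lt_min_iff] at hq
    dsimp only
    simp only [Finset.mem_sigma, Finset.mem_range, lt_min_iff]
    omega
  · rintro ⟨j, i'⟩ hp
    simp only [Finset.mem_sigma, Finset.mem_range, lt_min_iff] at hp
    refine Sigma.ext (by simp <;> omega) (heq_of_eq (by simp <;> omega))
  · rintro ⟨i, j'⟩ hq
    simp only [Finset.mem_sigma, Finset.mem_range, lt_min_iff] at hq
    refine Sigma.ext (by simp <;> omega) (heq_of_eq (by simp <;> omega))
  · rintro ⟨j, i'⟩ hp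
    simp only [Finset.mem_sigma, Finset.mem_range, lt_min_iff] at hp
    obtain ⟨hjN, hij, hir⟩ := hp
    dsimp only
    rw [show r - (r - 1 - i') = i' + 1 by omega,
        show N - (i' + 1) - (j - i') = N - 1 - j by omega]
    by_cases hz : rnomial r (N-1-j) (j-i') = 0
    · rw [hz]; simp
    · have hb : j - i' ≤ (r-1)*(N-1-j) := by
        by_contra hcon
        exact hz (rnomial_eq_zero r (N-1-j) (j-i') (by omega))
      rw [exp_arith r N j i' hr hjN (by omega) (by omega) hb]

open Polynomial Finset in
lemma RBon_eq (r : ℕ) (hr : 2 ≤ r) : ∀ N, RBon r (N+1) = Fpoly r N := by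
  intro N
  induction N using Nat.strong_induction_on with
  | _ N ih =>
    match N with
    | 0 =>
      rw [RBon, Fpoly]
      simp [rnomial_zero_right r 0 (by omega)]
    | (M+1) =>
      rw [show M + 1 + 1 = M + 2 by omega, RBon, Frec r (M+1) hr (by omega)]
      rw [← Finset.sum_attach (Finset.range r)
        (fun i => Polynomial.X ^ i * (if r - i ≤ M+1 then Fpoly r (M+1 - (r - i)) else 0))]
      apply Finset.sum_congr rfl
      rintro ⟨i, hi⟩ -
      rw [Finset.mem_range] at hi
      congr 1
      by_cases h : r - i ≤ M + 1
      · rw [if_pos h, show M + 2 - (r - i) = (M + 1 - (r - i)) + 1 by omega]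
        exact ih _ (by omega)
      · rw [if_neg h, show M + 2 - (r - i) = 0 by omega, RBon]

open Polynomial Finset in
lemma prod_rpow (r : ℕ) (hr : 2 ≤ r) (w : ℂ) (hw : IsPrimitiveRoot w r) (a : ℂ) :
    ∏ l ∈ Finset.range r, (X - C (a * w^l)) = X^r - C (a^r) := by
  by_cases ha : a = 0
  · subst ha
    simp [Finset.prod_const, zero_pow (by omega : r ≠ 0)]
  · set P : Polynomial ℂ := ∏ l ∈ Finset.range r, (X - C (a * w^l)) with hP
    set Q : Polynomial ℂ := X^r - C (a^r) with hQ
    have hPm : P.Monic := monic_prod_of_monic _ _ fun l _ => monic_X_sub_C _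
    have hQm : Q.Monic := monic_X_pow_sub_C _ (by omega)
    have hPd : P.degree = r := by
      rw [hP, degree_prod]
      simp only [degree_X_sub_C, Finset.sum_const, Finset.card_range, nsmul_eq_mul, mul_one]
    have hQd : Q.degree = r := degree_X_pow_sub_C (by omega) _
    by_contra hne
    have hsub : P - Q ≠ 0 := sub_ne_zero.mpr hne
    have hdeg : (P - Q).degree < r := by
      calc (P - Q).degree < P.degree :=
        degree_sub_lt (hPd.trans hQd.symm) hPm.ne_zero (by rw [hPm.leadingCoeff, hQm.leadingCoeff])
      _ = r := hPd
    have hnd : (P - Q).natDegree < r := by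
      rwa [← Polynomial.natDegree_lt_iff_degree_lt hsub] at hdeg
    have : P - Q = 0 := by
      apply Polynomial.eq_zero_of_natDegree_lt_card_of_eval_eq_zero (P - Q)
        (f := fun l : Fin r => a * w ^ (l : ℕ))
      · intro l1 l2 h
        have : w ^ (l1 : ℕ) = w ^ (l2 : ℕ) := mul_left_cancel₀ ha h
        exact Fin.ext (hw.pow_inj l1.2 l2.2 this)
      · intro l
        rw [Polynomial.eval_sub]
        have e1 : Polynomial.eval (a * w ^ (l : ℕ)) P = 0 := by
          rw [hP, Polynomial.eval_prod]
          apply Finset.prod_eq_zero (Finset.mem_range.mpr l.2)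
          simp
        have e2 : Polynomial.eval (a * w ^ (l : ℕ)) Q = 0 := by
          rw [hQ]
          simp only [Polynomial.eval_sub, Polynomial.eval_pow, Polynomial.eval_X,
            Polynomial.eval_C]
          rw [mul_pow, ← pow_mul, mul_comm (l : ℕ) r, pow_mul, hw.pow_eq_one, one_pow, mul_one,
            sub_self]
        rw [e1, e2, sub_zero]
      · simpa using hnd
    exact hsub this

open Polynomial Finset in
lemma coeff_comp_pow (p : Polynomial ℂ) (r t : ℕ) (hr : 1 ≤ r) :
    (p.comp (X^r)).coeff (r*t) = p.coeff t := by
  rw [Polynomial.comp, Polynomial.eval₂_eq_sum, Polynomial.coeff_sum]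
  have : ∀ e ∈ p.support, (C (p.coeff e) * (X^r)^e).coeff (r*t)
      = if e = t then p.coeff e else 0 := by
    intro e _
    rw [← pow_mul, Polynomial.coeff_C_mul, Polynomial.coeff_X_pow]
    have : (r * t = r * e) ↔ (e = t) := by
      rw [mul_right_inj' (by omega : r ≠ 0)]
      exact eq_comm
    simp only [this, mul_ite, mul_one, mul_zero]
  rw [Polynomial.sum_def, Finset.sum_congr rfl this, Finset.sum_ite_eq' p.support t]
  split
  · rfl
  · next h => exact (Polynomial.notMem_support_iff.mp h).symm

open Polynomial Finset in
lemma Fcoeff (r n j : ℕ) (hr : 2 ≤ r) (hn : 1 ≤ n) (hj : j ≤ (r-1)*n) :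
    (Fpoly r (r*n)).coeff (r*((r-1)*n - j)) = (rnomial r (r*n - j) j : ℂ) := by
  obtain ⟨s, rfl⟩ : ∃ s, r = s + 2 := ⟨r - 2, by omega⟩
  simp only [show s + 2 - 1 = s + 1 from rfl] at hj ⊢
  set m := (s+1)*n with hm
  have hmn : m + n = (s+2)*n := by rw [hm]; ring
  have hjrange : j ∈ Finset.range ((s+2)*n + 1) := by
    rw [Finset.mem_range]; omega
  rw [Fpoly, Polynomial.finset_sum_coeff]
  rw [Finset.sum_eq_single_of_mem j hjrange]
  · rw [Polynomial.coeff_C_mul, Polynomial.coeff_X_pow]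
    simp only [show s + 2 - 1 = s + 1 from rfl]
    have harith : (s+1)*((s+2)*n) - (s+2)*j = (s+2)*(m - j) := by
      obtain ⟨d, hd⟩ : ∃ d, m = j + d := ⟨m - j, by omega⟩
      have h1 : (s+1)*((s+2)*n) = (s+2)*j + (s+2)*d := by
        rw [show (s+1)*((s+2)*n) = (s+2)*((s+1)*n) by ring, ← hm, hd]; ring
      have h2 : (s+2)*(m - j) = (s+2)*d := by rw [hd, show j + d - j = d by omega]
      omega
    rw [harith, if_pos rfl, mul_one]
  · intro j' hj' hne
    rw [Polynomial.coeff_C_mul, Polynomial.coeff_X_pow]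
    simp only [show s + 2 - 1 = s + 1 from rfl]
    rw [Finset.mem_range] at hj'
    by_cases hj'm : j' ≤ m
    · have harith : (s+1)*((s+2)*n) - (s+2)*j' = (s+2)*(m - j') := by
        obtain ⟨d, hd⟩ : ∃ d, m = j' + d := ⟨m - j', by omega⟩
        have h1 : (s+1)*((s+2)*n) = (s+2)*j' + (s+2)*d := by
          rw [show (s+1)*((s+2)*n) = (s+2)*((s+1)*n) by ring, ← hm, hd]; ring
        have h2 : (s+2)*(m - j') = (s+2)*d := by rw [hd, show j' + d - j' = d by omega]
        omega
      rw [harith]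
      have hcond : ¬ ((s+2)*(m - j) = (s+2)*(m - j')) := by
        intro h
        have := mul_left_cancel₀ (by omega : (s+2:ℕ) ≠ 0) h
        omega
      rw [if_neg hcond, mul_zero]
    · have hz : rnomial (s+2) ((s+2)*n - j') j' = 0 := by
        apply rnomial_eq_zero
        simp only [show s + 2 - 1 = s + 1 from rfl]
        have hu : (s+2)*n - j' ≤ n - 1 := by omega
        have h5 : (s+1)*((s+2)*n - j') ≤ (s+1)*(n-1) := Nat.mul_le_mul_left _ hu
        have h6 : (s+1)*(n-1) + (s+1)*1 = (s+1)*n := by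
          rw [← Nat.mul_add]; congr 1; omega
        omega
      rw [hz]
      simp

theorem stmt_2 (r n : ℕ) (hr : 2 ≤ r) (hn : 1 ≤ n)
    (m : ℕ) (hm : m = (r - 1) * n)
    (w : ℂ) (hw : w = Complex.exp (2 * Real.pi * Complex.I / r))
    (x : Fin m → ℂ)
    (hfac : RBon r (r * n + 1) =
      ∏ k : Fin m, ∏ l ∈ Finset.range r,
        (Polynomial.X - Polynomial.C (x k * w ^ l))) :
    ∀ j : ℕ, j ≤ m →
      ∑ s ∈ Finset.powersetCard j (Finset.univ : Finset (Fin m)), ∏ k ∈ s, x k ^ r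
        = (-1) ^ j * (rnomial r (r * n - j) j : ℂ) := by
  intro j hj
  have hw' : IsPrimitiveRoot w r := by
    rw [hw]; exact Complex.isPrimitiveRoot_exp r (by omega)
  subst hm
  have h1 : RBon r (r*n+1) = ∏ k : Fin ((r-1)*n), (Polynomial.X^r - Polynomial.C (x k ^ r)) := by
    rw [hfac]
    exact Finset.prod_congr rfl fun k _ => prod_rpow r hr w hw' (x k)
  have h2 : (∏ k : Fin ((r-1)*n), (Polynomial.X^r - Polynomial.C (x k ^ r)))
      = (∏ k : Fin ((r-1)*n), (Polynomial.X - Polynomial.C (x k ^ r))).comp (Polynomial.X^r) := by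
    rw [Polynomial.prod_comp]
    exact Finset.prod_congr rfl fun k _ => by simp [Polynomial.sub_comp]
  have hkey : ((rnomial r (r*n - j) j : ℕ) : ℂ)
      = (∏ k : Fin ((r-1)*n), (Polynomial.X - Polynomial.C (x k ^ r))).coeff ((r-1)*n - j) := by
    rw [← Fcoeff r n j hr hn hj, ← RBon_eq r hr (r*n), h1, h2,
      coeff_comp_pow _ r _ (by omega)]
  have hvieta : (∏ k : Fin ((r-1)*n), (Polynomial.X - Polynomial.C (x k ^ r))).coeff ((r-1)*n - j)
      = (-1)^j * ∑ s ∈ Finset.powersetCard j (Finset.univ : Finset (Fin ((r-1)*n))),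
          ∏ k ∈ s, x k ^ r := by
    have hcard : Multiset.card (Multiset.map (fun k => x k ^ r)
        (Finset.univ : Finset (Fin ((r-1)*n))).val) = (r-1)*n := by simp
    have hV := Multiset.prod_X_sub_C_coeff
      (Multiset.map (fun k => x k ^ r) (Finset.univ : Finset (Fin ((r-1)*n))).val)
      (k := (r-1)*n - j) (by rw [hcard]; omega)
    rw [hcard, show (r-1)*n - ((r-1)*n - j) = j by omega, Multiset.map_map] at hV
    have hprod : (∏ k : Fin ((r-1)*n), (Polynomial.X - Polynomial.C (x k ^ r)))
        = (Multiset.map ((fun t => Polynomial.X - Polynomial.C t) ∘ fun k => x k ^ r)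
            (Finset.univ : Finset (Fin ((r-1)*n))).val).prod := rfl
    rw [hprod, hV, Finset.esymm_map_val]
  rw [hvieta] at hkey
  rw [hkey, ← mul_assoc, ← mul_pow, neg_mul_neg, one_mul, one_pow, one_mul]
end

section
/- Let r ≥ 2 and n ≥ 1 be integers. The R-Bonacci polynomial R_n satisfies the algebraic representation R_n(x) = ∑_{j=0}^{⌊(r-1)(n-1)/r⌋} C_r(n - j - 1, j) · x^{(r-1)(n-1) - rj}. -/
/-!
Writing `T(a, j) = C_r(a, j) x^((r-1)a - j)`, the Pascal-type rule
`C_r(a+1, j) = ∑_{k<r} C_r(a, j-k)` together with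
`x^((r-1)(a+1) - j) = x^(r-1-k) x^((r-1)a - (j-k))` shows that the antidiagonal sums
`∑_{a+j=n-1} T(a, j)` obey the R-Bonacci recursion, so they equal `R_n`. The terms with
`rj > (r-1)(n-1)` vanish because then `j` exceeds `deg (1 + X + ⋯ + X^(r-1))^(n-1-j)`.
-/

open Polynomial Finset

lemma rnomial_succ_s14 (r a j : ℕ) :
    rnomial r (a + 1) j = ∑ k ∈ range r, if k ≤ j then rnomial r a (j - k) else 0 := by
  unfold rnomial
  rw [pow_succ', sum_mul, finsetSum_coeff]
  refine sum_congr rfl fun k _ => ?_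
  rw [X_pow_mul, coeff_mul_X_pow']

lemma rnomial_eq_zero_of_lt {r a j : ℕ} (h : (r - 1) * a < j) : rnomial r a j = 0 := by
  refine coeff_eq_zero_of_natDegree_lt (natDegree_pow_le.trans_lt ?_)
  have hdeg : (∑ i ∈ range r, (X : ℕ[X]) ^ i).natDegree ≤ r - 1 :=
    natDegree_sum_le_of_forall_le _ _ fun i hi => by
      rw [natDegree_X_pow]; exact Nat.le_pred_of_lt (mem_range.mp hi)
  calc _ ≤ a * (r - 1) := Nat.mul_le_mul_left a hdeg
    _ < j := by rwa [Nat.mul_comm]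

lemma sub_one_mul_sub_lt_of_div_lt {r m j : ℕ} (h : (r - 1) * m / r < j) :
    (r - 1) * (m - j) < j := by
  rcases r with _ | s
  · simp only [Nat.div_zero] at h; simpa using h
  · rw [Nat.add_sub_cancel] at h ⊢
    rw [Nat.div_lt_iff_lt_mul s.succ_pos, Nat.mul_succ, Nat.mul_comm j s] at h
    have hj : j ≠ 0 := by rintro rfl; simp at h
    rw [Nat.mul_sub]
    omega

lemma sub_one_mul_sub_sub (r m j : ℕ) : (r - 1) * (m - j) - j = (r - 1) * m - r * j := by
  rcases r with _ | s
  · simp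
  · rw [Nat.add_sub_cancel, Nat.mul_sub, Nat.sub_sub, add_mul, one_mul]

lemma sum_range_ite_le {M : Type*} [AddCommMonoid M] (f : ℕ → M) (k n : ℕ) :
    ∑ j ∈ range n, (if k ≤ j then f j else 0) = ∑ j ∈ range (n - k), f (k + j) := by
  rw [← sum_filter, range_eq_Ico, Ico_filter_le, sum_Ico_eq_sum_range, Nat.zero_max]

-- The truncated exponent is harmless: `rnomial r a j = 0` unless `j ≤ (r - 1) * a`.
noncomputable def rbonTerm (r a j : ℕ) : ℂ[X] := C (rnomial r a j : ℂ) * X ^ ((r - 1) * a - j)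

lemma rbonTerm_succ (r a j : ℕ) :
    rbonTerm r (a + 1) j =
      ∑ k ∈ range r, if k ≤ j then X ^ (r - 1 - k) * rbonTerm r a (j - k) else 0 := by
  unfold rbonTerm
  rw [rnomial_succ_s14]
  push_cast
  rw [map_sum, sum_mul]
  refine sum_congr rfl fun k hk => ?_
  split_ifs with hkj
  · by_cases h0 : rnomial r a (j - k) = 0
    · simp [h0]
    have hle := not_lt.mp (mt rnomial_eq_zero_of_lt h0)
    have hk := mem_range.mp hk
    have hexp : (r - 1) * (a + 1) - j = (r - 1 - k) + ((r - 1) * a - (j - k)) := by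
      rw [mul_add_one]; omega
    rw [hexp, pow_add]
    ring
  · simp

-- Indexed like `RBon`, so that `rbonSum r 0 = 0` matches `RBon r 0 = 0`.
noncomputable def rbonSum (r n : ℕ) : ℂ[X] := ∑ j ∈ range n, rbonTerm r (n - 1 - j) j

lemma rbonSum_add_two (r n : ℕ) :
    rbonSum r (n + 2) = ∑ k ∈ range r, X ^ (r - 1 - k) * rbonSum r (n + 1 - k) := by
  have hlast : rbonTerm r (n + 2 - 1 - (n + 1)) (n + 1) = 0 := by
    rw [rbonTerm, rnomial_eq_zero_of_lt (by simp), Nat.cast_zero, map_zero, zero_mul]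
  rw [rbonSum, sum_range_succ, hlast, add_zero]
  calc ∑ j ∈ range (n + 1), rbonTerm r (n + 2 - 1 - j) j
      = ∑ j ∈ range (n + 1), rbonTerm r (n - j + 1) j :=
        sum_congr rfl fun j hj => by rw [show n + 2 - 1 - j = n - j + 1 by
          have := mem_range.mp hj; omega]
    _ = ∑ k ∈ range r, ∑ j ∈ range (n + 1),
          if k ≤ j then X ^ (r - 1 - k) * rbonTerm r (n - j) (j - k) else 0 := by
        simp_rw [rbonTerm_succ]; exact sum_comm
    _ = _ := by
        refine sum_congr rfl fun k _ => ?_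
        rw [sum_range_ite_le, rbonSum, mul_sum]
        refine sum_congr rfl fun j _ => ?_
        rw [Nat.add_sub_cancel_left, show n - (k + j) = n + 1 - k - 1 - j by omega]

lemma RBon_eq_rbonSum (r n : ℕ) : RBon r n = rbonSum r n := by
  induction n using Nat.strong_induction_on with
  | _ n ih =>
    match n with
    | 0 => simp [RBon, rbonSum]
    | 1 => simp [RBon, rbonSum, rbonTerm, rnomial]
    | n + 2 =>
      rw [RBon, sum_attach (range r) (fun i => X ^ i * RBon r (n + 2 - (r - i))),
        rbonSum_add_two, ← sum_range_reflect]
      refine sum_congr rfl fun k hk => ?_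
      have hk := mem_range.mp hk
      rw [show n + 2 - (r - (r - 1 - k)) = n + 1 - k by omega, ih _ (by omega)]

theorem stmt_14_general (r n : ℕ) (hn : 1 ≤ n) :
    RBon r n = ∑ j ∈ Finset.range ((r - 1) * (n - 1) / r + 1),
      Polynomial.C (rnomial r (n - j - 1) j : ℂ)
        * Polynomial.X ^ ((r - 1) * (n - 1) - r * j) := by
  obtain ⟨m, rfl⟩ : ∃ m, n = m + 1 := ⟨n - 1, by omega⟩
  simp only [RBon_eq_rbonSum, rbonSum, rbonTerm, add_tsub_cancel_right, Nat.sub_sub,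
    Nat.add_sub_add_right, sub_one_mul_sub_sub]
  have hbound : (r - 1) * m / r + 1 ≤ m + 1 :=
    Nat.succ_le_succ (Nat.div_le_of_le_mul (Nat.mul_le_mul_right m (Nat.sub_le r 1)))
  refine (sum_subset (range_subset_range.mpr hbound) fun j _ hj => ?_).symm
  have hj : (r - 1) * m / r < j := by simpa using hj
  rw [rnomial_eq_zero_of_lt (sub_one_mul_sub_lt_of_div_lt hj), Nat.cast_zero, map_zero, zero_mul]

theorem stmt_14 (r n : ℕ) (hr : 2 ≤ r) (hn : 1 ≤ n) :
    RBon r n = ∑ j ∈ Finset.range ((r - 1) * (n - 1) / r + 1),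
      Polynomial.C (rnomial r (n - j - 1) j : ℂ)
        * Polynomial.X ^ ((r - 1) * (n - 1) - r * j) :=
  stmt_14_general r n hn
end
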